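/- Let d₁, h₁, d₂, h₂ ∈ ℝ⟦X⟧ with h₁ having constant coefficient 0. Then for all n, k ∈ ℕ: Σ_{j=0}^{n} (coeff n (d₁·h₁^j))·(coeff j (d₂·h₂^k)) = coeff n (d₁·(d₂∘h₁)·(h₂∘h₁)^k). -/

import Mathlib

open PowerSeries

/-!
Substituting a series with zero constant coefficient is a ring homomorphism (`PowerSeries.subst`),
so `(d₂ h₂ᵏ) ∘ h₁ = (d₂ ∘ h₁)(h₂ ∘ h₁)ᵏ`. Since `[zⁿ] (d₁ · (g ∘ h₁))` is linear in the coefficients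
of `g`, namely `∑ⱼ gⱼ [zⁿ] (d₁ h₁ʲ)`, taking `g = d₂ h₂ᵏ` gives the identity.
-/

/-- Substitution (composition) of formal power series: `psComp g f = g ∘ f`,
the substitution of `f` into `g`.  When `f` has zero constant coefficient, the
`n`-th coefficient of `g ∘ f` is `∑_{k=0}^{n} g_k · [zⁿ] fᵏ`. -/
noncomputable def psComp (g f : PowerSeries ℝ) : PowerSeries ℝ :=
  PowerSeries.mk fun n => ∑ k ∈ Finset.range (n + 1),
    PowerSeries.coeff k g * PowerSeries.coeff n (f ^ k)

theorem PowerSeries.coeff_pow_eq_zero_of_lt {R : Type*} [CommSemiring R] {f : R⟦X⟧}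
    (hf : constantCoeff f = 0) {m j : ℕ} (h : m < j) : coeff m (f ^ j) = 0 :=
  X_pow_dvd_iff.mp (pow_dvd_pow_of_dvd (X_dvd_iff.mpr hf) j) m h

theorem coeff_psComp_of_le {f : ℝ⟦X⟧} (hf : constantCoeff f = 0) (g : ℝ⟦X⟧) {m n : ℕ}
    (hmn : m ≤ n) :
    coeff m (psComp g f) = ∑ j ∈ Finset.range (n + 1), coeff j g * coeff m (f ^ j) := by
  rw [psComp, coeff_mk]
  refine Finset.sum_subset (Finset.range_subset_range.mpr (by omega)) fun j _ hj => ?_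
  rw [coeff_pow_eq_zero_of_lt hf (by simpa using hj), mul_zero]

theorem psComp_eq_subst {f : ℝ⟦X⟧} (hf : constantCoeff f = 0) (g : ℝ⟦X⟧) :
    psComp g f = subst f g := by
  ext n
  rw [coeff_subst' (HasSubst.of_constantCoeff_zero' hf), coeff_psComp_of_le hf g le_rfl,
    finsum_eq_sum_of_support_subset _ (s := Finset.range (n + 1)) fun j hj => ?_]
  · rfl
  · simp only [Function.mem_support, Finset.coe_range, Set.mem_Iio] at hj ⊢
    by_contra hjn
    exact hj (by rw [coeff_pow_eq_zero_of_lt hf (by omega), smul_zero])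

theorem psComp_mul {f : ℝ⟦X⟧} (hf : constantCoeff f = 0) (g₁ g₂ : ℝ⟦X⟧) :
    psComp (g₁ * g₂) f = psComp g₁ f * psComp g₂ f := by
  simp only [psComp_eq_subst hf, subst_mul (HasSubst.of_constantCoeff_zero' hf)]

theorem psComp_pow {f : ℝ⟦X⟧} (hf : constantCoeff f = 0) (g : ℝ⟦X⟧) (k : ℕ) :
    psComp (g ^ k) f = psComp g f ^ k := by
  simp only [psComp_eq_subst hf, subst_pow (HasSubst.of_constantCoeff_zero' hf)]

theorem coeff_mul_psComp {f : ℝ⟦X⟧} (hf : constantCoeff f = 0) (a g : ℝ⟦X⟧) (n : ℕ) :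
    coeff n (a * psComp g f) = ∑ j ∈ Finset.range (n + 1), coeff j g * coeff n (a * f ^ j) := by
  simp only [coeff_mul, Finset.mul_sum]
  rw [Finset.sum_comm]
  refine Finset.sum_congr rfl fun p hp => ?_
  rw [coeff_psComp_of_le hf g (Finset.HasAntidiagonal.antidiagonal.snd_le hp), Finset.mul_sum]
  exact Finset.sum_congr rfl fun j _ => by ring

theorem stmt14 (d₁ h₁ d₂ h₂ : PowerSeries ℝ) (hh₁ : constantCoeff h₁ = 0)
    (n k : ℕ) :
    ∑ j ∈ Finset.range (n + 1),
        coeff n (d₁ * h₁ ^ j) * coeff j (d₂ * h₂ ^ k)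
      = coeff n (d₁ * psComp d₂ h₁ * (psComp h₂ h₁) ^ k) := by
  rw [mul_assoc, ← psComp_pow hh₁, ← psComp_mul hh₁, coeff_mul_psComp hh₁]
  exact Finset.sum_congr rfl fun j _ => mul_comm _ _
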